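/- Let c ∈ R^d and let u ∈ {-1,0,+1}^d be nonzero with support S = {i : u_i ≠ 0}. Then for α = 2‖c‖_∞ + 2, the unit cube [0,1]^d is contained in the union over i ∈ S of the pyramids P^{-u_i}_i(c + αu). -/
import Mathlib


/-- The `s`-pyramid in direction `i` around `z` (ℓ∞-norm). -/
def Pyr {d : ℕ} (s : ℝ) (i : Fin d) (z : Fin d → ℝ) : Set (Fin d → ℝ) :=
  {y | s * (y i - z i) = ‖y - z‖}

theorem pulling_upper_bound {d : ℕ} (c : Fin d → ℝ)
    (u : Fin d → ℝ) (hu : ∀ j, u j = -1 ∨ u j = 0 ∨ u j = 1) (hu0 : u ≠ 0) :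
    Set.Icc (0 : Fin d → ℝ) 1 ⊆
      ⋃ i ∈ {i : Fin d | u i ≠ 0}, Pyr (-(u i)) i (c + (2 * ‖c‖ + 2) • u) := by
  intro y hy
  set z : Fin d → ℝ := c + (2 * ‖c‖ + 2) • u with hzdef
  have hzj : ∀ j, z j = c j + (2 * ‖c‖ + 2) * u j := by
    intro j; simp [hzdef]
  obtain ⟨i0, hi0⟩ := Function.ne_iff.mp hu0
  simp only [Pi.zero_apply] at hi0
  have hS : (Finset.univ.filter (fun i : Fin d => u i ≠ 0)).Nonempty :=
    ⟨i0, by simp [hi0]⟩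
  obtain ⟨i, hiS, hmax⟩ := Finset.exists_max_image _ (fun j => |y j - z j|) hS
  have hiu : u i ≠ 0 := (Finset.mem_filter.mp hiS).2
  have hy0 : ∀ j, 0 ≤ y j := fun j => hy.1 j
  have hy1 : ∀ j, y j ≤ 1 := fun j => hy.2 j
  have hc : ∀ j, |c j| ≤ ‖c‖ := by
    intro j
    have := norm_le_pi_norm c j
    simpa [Real.norm_eq_abs] using this
  have key : ∀ j, u j ≠ 0 →
      -(u j) * (y j - z j) = |y j - z j| ∧ ‖c‖ + 1 ≤ |y j - z j| := by
    intro j hj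
    have h0 := hy0 j
    have h1 := hy1 j
    have h2 := abs_le.mp (hc j)
    rcases hu j with h | h | h
    · have ht : ‖c‖ + 1 ≤ y j - z j := by
        rw [hzj j, h]; nlinarith [norm_nonneg c]
      have habs : |y j - z j| = y j - z j :=
        abs_of_nonneg (by nlinarith [norm_nonneg c])
      constructor
      · rw [habs, h]; ring
      · rw [habs]; exact ht
    · exact absurd h hj
    · have ht : y j - z j ≤ -(‖c‖ + 1) := by
        rw [hzj j, h]; nlinarith [norm_nonneg c]
      have habs : |y j - z j| = -(y j - z j) :=
        abs_of_nonpos (by nlinarith [norm_nonneg c])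
      constructor
      · rw [habs, h]; ring
      · rw [habs]; linarith
  have hnon : ∀ j, u j = 0 → |y j - z j| ≤ ‖c‖ + 1 := by
    intro j hj
    have h0 := hy0 j
    have h1 := hy1 j
    have h2 := abs_le.mp (hc j)
    rw [hzj j, hj]
    rw [abs_le]
    constructor <;> nlinarith [norm_nonneg c]
  have hnorm : ‖y - z‖ = |y i - z i| := by
    apply le_antisymm
    · apply (pi_norm_le_iff_of_nonneg (abs_nonneg _)).mpr
      intro j
      rw [Pi.sub_apply, Real.norm_eq_abs]
      by_cases hj : u j = 0
      · exact (hnon j hj).trans (key i hiu).2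
      · exact hmax j (Finset.mem_filter.mpr ⟨Finset.mem_univ j, hj⟩)
    · have := norm_le_pi_norm (y - z) i
      simpa [Real.norm_eq_abs] using this
  refine Set.mem_iUnion₂.mpr ⟨i, hiu, ?_⟩
  show -(u i) * (y i - z i) = ‖y - z‖
  rw [hnorm]
  exact (key i hiu).1
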